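/- Let μ be an atomless (continuous) probability measure on ℝ, let θ > 0, and for n ≥ 1 set p_n(θ) := μ^{⊗(n+1)}({x ∈ ℝ^{n+1} : x_{i+1} ≥ θ·x_i for all 1 ≤ i ≤ n}), with p_0(θ) := 1. Then for every n ≥ 0 one has p_n(θ) = ∑_{k=1}^n (-1)^{k-1} · p_{n-k}(θ) · p_{k-1}(1/θ) + (-1)^n · p_n(1/θ). -/

import Mathlib

open MeasureTheory Set

/-- Persistence probability `p_n(θ) = P(X_2 ≥ θX_1, …, X_{n+1} ≥ θX_n)` for
`X_1,…,X_{n+1}` i.i.d. with common law `μ`, with `p_0(θ) := 1`. -/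
noncomputable def genPers (μ : Measure ℝ) (θ : ℝ) : ℕ → ℝ
  | 0 => 1
  | n + 1 =>
    ((Measure.pi fun _ : Fin (n + 2) => μ)
      {x : Fin (n + 2) → ℝ | ∀ i : Fin (n + 1), θ * x i.castSucc ≤ x i.succ}).toReal

namespace GenPersDual

/-- Condition selector: `none` = no condition, `some true` = `θ*u ≤ v`,
`some false` = `v < θ*u`. -/
def cnd (θ : ℝ) : Option Bool → ℝ → ℝ → Prop
  | none, _, _ => True
  | some true, u, v => θ * u ≤ v
  | some false, u, v => v < θ * u

/-- Product measure on `Fin (N+1) → ℝ`. -/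
noncomputable def pm (μ : Measure ℝ) (N : ℕ) : Measure (Fin (N + 1) → ℝ) :=
  Measure.pi fun _ => μ

instance pm_prob (μ : Measure ℝ) [IsProbabilityMeasure μ] (N : ℕ) :
    IsProbabilityMeasure (pm μ N) := by
  unfold pm; infer_instance

/-- The event that consecutive coordinates satisfy the conditions given by `s`. -/
def Tset (θ : ℝ) (N : ℕ) (s : ℕ → Option Bool) : Set (Fin (N + 1) → ℝ) :=
  {x | ∀ i : ℕ, (h : i + 1 ≤ N) →
    cnd θ (s i) (x ⟨i, by omega⟩) (x ⟨i + 1, by omega⟩)}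

lemma measurableSet_cnd {α : Type*} [MeasurableSpace α] (θ : ℝ) (o : Option Bool)
    {f g : α → ℝ} (hf : Measurable f) (hg : Measurable g) :
    MeasurableSet {a | cnd θ o (f a) (g a)} := by
  rcases o with _ | b
  · simp only [cnd, setOf_true]; exact MeasurableSet.univ
  · cases b
    · exact measurableSet_lt hg (hf.const_mul θ)
    · exact measurableSet_le (hf.const_mul θ) hg

lemma measurableSet_Tset (θ : ℝ) (N : ℕ) (s : ℕ → Option Bool) :
    MeasurableSet (Tset θ N s) := by
  have : Tset θ N s = ⋂ (i : ℕ) (h : i + 1 ≤ N),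
      {x : Fin (N + 1) → ℝ | cnd θ (s i) (x ⟨i, by omega⟩) (x ⟨i + 1, by omega⟩)} := by
    ext x; simp [Tset]
  rw [this]
  exact MeasurableSet.iInter fun i => MeasurableSet.iInter fun h =>
    measurableSet_cnd θ (s i) (measurable_pi_apply _) (measurable_pi_apply _)

lemma Tset_congr (θ : ℝ) (N : ℕ) {s s' : ℕ → Option Bool}
    (h : ∀ i, i + 1 ≤ N → s i = s' i) : Tset θ N s = Tset θ N s' := by
  ext x
  constructor <;> intro H i hi
  · rw [← h i hi]; exact H i hi
  · rw [h i hi]; exact H i hi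

lemma pm_Tset_split (μ : Measure ℝ) [IsProbabilityMeasure μ] (θ : ℝ) (N : ℕ)
    (s : ℕ → Option Bool) (j : ℕ) (hj : j + 1 ≤ N) (hnone : s j = none) :
    pm μ N (Tset θ N s) =
      pm μ N (Tset θ N (Function.update s j (some true))) +
        pm μ N (Tset θ N (Function.update s j (some false))) := by
  have hUnion : Tset θ N s =
      Tset θ N (Function.update s j (some true)) ∪
        Tset θ N (Function.update s j (some false)) := by
    ext x
    constructor
    · intro hx
      rcases le_or_gt (θ * x ⟨j, by omega⟩) (x ⟨j + 1, by omega⟩) with h | h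
      · left
        intro i hi
        rcases eq_or_ne i j with rfl | hne
        · rw [Function.update_self]; exact h
        · rw [Function.update_of_ne hne]; exact hx i hi
      · right
        intro i hi
        rcases eq_or_ne i j with rfl | hne
        · rw [Function.update_self]; exact h
        · rw [Function.update_of_ne hne]; exact hx i hi
    · rintro (hx | hx) i hi
      · rcases eq_or_ne i j with rfl | hne
        · rw [hnone]; trivial
        · have := hx i hi; rwa [Function.update_of_ne hne] at this
      · rcases eq_or_ne i j with rfl | hne
        · rw [hnone]; trivial
        · have := hx i hi; rwa [Function.update_of_ne hne] at this
  have hdisj : Disjoint (Tset θ N (Function.update s j (some true)))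
      (Tset θ N (Function.update s j (some false))) := by
    rw [Set.disjoint_left]
    intro x h1 h2
    have e1 := h1 j hj
    have e2 := h2 j hj
    rw [Function.update_self] at e1 e2
    exact absurd e1 (not_le.mpr e2)
  rw [hUnion, measure_union hdisj (measurableSet_Tset θ N _)]

/-- Any "hyperplane" `{x | x a = θ * x b}` with `a ≠ b` is null. -/
lemma pm_line_null (μ : Measure ℝ) [IsProbabilityMeasure μ]
    (hatomless : ∀ x : ℝ, μ {x} = 0) (θ : ℝ) {N : ℕ} (a b : Fin (N + 1)) (hab : b ≠ a) :
    pm μ N {x : Fin (N + 1) → ℝ | x a = θ * x b} = 0 := by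
  obtain ⟨i, hi⟩ := Fin.exists_succAbove_eq hab
  set e := MeasurableEquiv.piFinSuccAbove (fun _ : Fin (N + 1) => ℝ) a with he
  have hmp : MeasurePreserving e (pm μ N)
      (μ.prod (Measure.pi fun _ : Fin N => μ)) :=
    measurePreserving_piFinSuccAbove (fun _ : Fin (N + 1) => μ) a
  have hset : {x : Fin (N + 1) → ℝ | x a = θ * x b} =
      e ⁻¹' {p : ℝ × (Fin N → ℝ) | p.1 = θ * p.2 i} := by
    ext x
    have h1 : (e x).1 = x a := rfl
    have h2 : (e x).2 i = x (a.succAbove i) := rfl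
    simp only [Set.mem_preimage, Set.mem_setOf_eq, h1, h2, hi]
  rw [hset, hmp.measure_preimage_equiv]
  have hT : MeasurableSet {p : ℝ × (Fin N → ℝ) | p.1 = θ * p.2 i} :=
    measurableSet_eq_fun measurable_fst (Measurable.const_mul (f := fun p : ℝ × (Fin N → ℝ) => p.2 i) ((measurable_pi_apply i).comp measurable_snd) θ)
  rw [Measure.prod_apply_symm hT]
  have hfib : ∀ y : Fin N → ℝ,
      ((fun u : ℝ => (u, y)) ⁻¹' {p : ℝ × (Fin N → ℝ) | p.1 = θ * p.2 i}) = {θ * y i} := by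
    intro y; ext u; simp
  simp only [hfib, hatomless, lintegral_zero]

/-- Replacing strict inequalities `x_{i+1} < θ x_i` by non-strict ones does not
change the measure. -/
lemma pm_strict_eq_nonstrict (μ : Measure ℝ) [IsProbabilityMeasure μ]
    (hatomless : ∀ x : ℝ, μ {x} = 0) (θ : ℝ) (N : ℕ) :
    pm μ N {x : Fin (N + 1) → ℝ | ∀ i : ℕ, (h : i + 1 ≤ N) →
        x ⟨i + 1, by omega⟩ < θ * x ⟨i, by omega⟩} =
      pm μ N {x : Fin (N + 1) → ℝ | ∀ i : ℕ, (h : i + 1 ≤ N) →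
        x ⟨i + 1, by omega⟩ ≤ θ * x ⟨i, by omega⟩} := by
  set S : Set (Fin (N + 1) → ℝ) := {x | ∀ i : ℕ, (h : i + 1 ≤ N) →
    x ⟨i + 1, by omega⟩ < θ * x ⟨i, by omega⟩} with hS
  set T : Set (Fin (N + 1) → ℝ) := {x | ∀ i : ℕ, (h : i + 1 ≤ N) →
    x ⟨i + 1, by omega⟩ ≤ θ * x ⟨i, by omega⟩} with hT
  set U : Set (Fin (N + 1) → ℝ) := ⋃ (i : ℕ) (h : i + 1 ≤ N),
    {x : Fin (N + 1) → ℝ | x ⟨i + 1, by omega⟩ = θ * x ⟨i, by omega⟩} with hU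
  have hUnull : pm μ N U = 0 := by
    rw [hU]
    refine measure_iUnion_null fun i => measure_iUnion_null fun h => ?_
    exact pm_line_null μ hatomless θ _ _ (by simp [Fin.ext_iff])
  have hsub : T ⊆ S ∪ U := by
    intro x hx
    by_cases hxS : x ∈ S
    · exact Or.inl hxS
    · right
      rw [hS, Set.mem_setOf_eq] at hxS
      push_neg at hxS
      obtain ⟨i, hi, hlt⟩ := hxS
      refine Set.mem_iUnion.mpr ⟨i, Set.mem_iUnion.mpr ⟨hi, ?_⟩⟩
      exact le_antisymm (hx i hi) hlt
  refine le_antisymm (measure_mono fun x hx i hi => le_of_lt (hx i hi)) ?_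
  calc pm μ N T ≤ pm μ N (S ∪ U) := measure_mono hsub
    _ ≤ pm μ N S + pm μ N U := measure_union_le _ _
    _ = pm μ N S := by rw [hUnull, add_zero]

/-- Reversing the coordinates preserves the product measure. -/
lemma measurePreserving_compRev (μ : Measure ℝ) [IsProbabilityMeasure μ] (N : ℕ) :
    MeasurePreserving (fun x : Fin (N + 1) → ℝ => x ∘ Fin.rev) (pm μ N) (pm μ N) := by
  have hmeas : Measurable (fun x : Fin (N + 1) → ℝ => x ∘ Fin.rev) :=
    measurable_pi_lambda _ fun j => measurable_pi_apply _
  refine ⟨hmeas, ?_⟩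
  refine (Measure.pi_eq fun t ht => ?_).symm
  rw [Measure.map_apply hmeas (MeasurableSet.univ_pi ht)]
  have hpre : (fun x : Fin (N + 1) → ℝ => x ∘ Fin.rev) ⁻¹' (Set.pi Set.univ t) =
      Set.pi Set.univ (fun i => t (Fin.rev i)) := by
    ext x
    simp only [Set.mem_preimage, Set.mem_pi, Set.mem_univ, forall_true_left,
      Function.comp_apply, true_implies]
    constructor <;>
      · intro h i
        have h2 := h i.rev
        rw [Fin.rev_rev] at h2
        exact h2
  rw [hpre]
  show pm μ N _ = _
  rw [pm, Measure.pi_pi]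
  exact Equiv.prod_comp Fin.revPerm fun i => μ (t i)

/-- Reversal duality: all-strict-descents event has the same measure as the
all-ascents event with slope `1/θ`. -/
lemma pm_allFalse_eq (μ : Measure ℝ) [IsProbabilityMeasure μ]
    (hatomless : ∀ x : ℝ, μ {x} = 0) {θ : ℝ} (hθ : 0 < θ) (N : ℕ) :
    pm μ N (Tset θ N fun _ => some false) =
      pm μ N (Tset (1 / θ) N fun _ => some true) := by
  have h1 : Tset θ N (fun _ => some false) =
      {x : Fin (N + 1) → ℝ | ∀ i : ℕ, (h : i + 1 ≤ N) →
        x ⟨i + 1, by omega⟩ < θ * x ⟨i, by omega⟩} := rfl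
  rw [h1, pm_strict_eq_nonstrict μ hatomless θ N]
  -- now use the reversal map
  have hmp := measurePreserving_compRev μ N
  have hset : {x : Fin (N + 1) → ℝ | ∀ i : ℕ, (h : i + 1 ≤ N) →
      x ⟨i + 1, by omega⟩ ≤ θ * x ⟨i, by omega⟩} =
      (fun x : Fin (N + 1) → ℝ => x ∘ Fin.rev) ⁻¹' (Tset (1 / θ) N fun _ => some true) := by
    have key : ∀ a b : ℝ, 1 / θ * a ≤ b ↔ a ≤ θ * b := fun a b => by
      rw [one_div, inv_mul_le_iff₀ hθ]
    ext x
    simp only [Set.mem_preimage, Set.mem_setOf_eq, Tset, cnd, Function.comp_apply]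
    constructor
    · intro H i hi
      have hrev1 : (⟨i, by omega⟩ : Fin (N + 1)).rev = ⟨N - i - 1 + 1, by omega⟩ := by
        rw [Fin.ext_iff, Fin.val_rev]; show N + 1 - (i + 1) = N - i - 1 + 1; omega
      have hrev2 : (⟨i + 1, by omega⟩ : Fin (N + 1)).rev = ⟨N - i - 1, by omega⟩ := by
        rw [Fin.ext_iff, Fin.val_rev]; show N + 1 - (i + 1 + 1) = N - i - 1; omega
      rw [hrev1, hrev2, key]
      exact H (N - i - 1) (by omega)
    · intro H i hi
      have hrev1 : (⟨N - i - 1, by omega⟩ : Fin (N + 1)).rev = ⟨i + 1, by omega⟩ := by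
        rw [Fin.ext_iff, Fin.val_rev]; show N + 1 - (N - i - 1 + 1) = i + 1; omega
      have hrev2 : (⟨N - i - 1 + 1, by omega⟩ : Fin (N + 1)).rev = ⟨i, by omega⟩ := by
        rw [Fin.ext_iff, Fin.val_rev]; show N + 1 - (N - i - 1 + 1 + 1) = i; omega
      rw [← key, ← hrev1, ← hrev2]
      exact H (N - i - 1) (by omega)
  rw [hset, hmp.measure_preimage (measurableSet_Tset _ _ _).nullMeasurableSet]

/-- `genPers` as a measure of a `Tset`. -/
lemma genPers_eq_pm (μ : Measure ℝ) [IsProbabilityMeasure μ] (θ : ℝ) (N : ℕ) :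
    genPers μ θ N = (pm μ N (Tset θ N fun _ => some true)).toReal := by
  cases N with
  | zero =>
    have : Tset θ 0 (fun _ => some true) = Set.univ := by
      ext x; simp [Tset]
    rw [this, measure_univ]
    simp [genPers]
  | succ n =>
    have hset : {x : Fin (n + 2) → ℝ | ∀ i : Fin (n + 1), θ * x i.castSucc ≤ x i.succ} =
        Tset θ (n + 1) (fun _ => some true) := by
      ext x
      simp only [Set.mem_setOf_eq, Tset, cnd]
      constructor
      · intro H i hi
        have := H ⟨i, by omega⟩
        simpa [Fin.castSucc, Fin.succ, Fin.castAdd, Fin.castLE] using this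
      · intro H i
        have := H i.val (by omega)
        have e1 : (⟨i.val, by omega⟩ : Fin (n + 2)) = i.castSucc := by
          simp [Fin.ext_iff]
        have e2 : (⟨i.val + 1, by omega⟩ : Fin (n + 2)) = i.succ := by
          simp [Fin.ext_iff]
        rwa [e1, e2] at this
    show (_ : ℝ) = _
    rw [genPers]
    rw [hset]
    rfl

/-- Splitting lemma: if no condition is imposed at index `j`, the event factorizes. -/
lemma pm_Tset_prod (μ : Measure ℝ) [IsProbabilityMeasure μ] (θ : ℝ)
    (s : ℕ → Option Bool) (j M : ℕ) (hnone : s j = none) :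
    pm μ (j + (M + 1)) (Tset θ (j + (M + 1)) s) =
      pm μ j (Tset θ j s) * pm μ M (Tset θ M fun i => s (j + 1 + i)) := by
  set N := j + (M + 1) with hN
  have hcard : (j + 1) + (M + 1) = N + 1 := by omega
  set g : Fin (j + 1) ⊕ Fin (M + 1) ≃ Fin (N + 1) :=
    finSumFinEquiv.trans (finCongr hcard) with hg
  have hgl : ∀ a : Fin (j + 1), (g (Sum.inl a)).val = a.val := by
    intro a; simp [hg]
  have hgr : ∀ b : Fin (M + 1), (g (Sum.inr b)).val = j + 1 + b.val := by
    intro b; simp [hg]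
  set E1 := MeasurableEquiv.piCongrLeft (fun _ : Fin (N + 1) => ℝ) g with hE1
  set E2 := MeasurableEquiv.sumPiEquivProdPi (fun _ : Fin (j + 1) ⊕ Fin (M + 1) => ℝ) with hE2
  have hmp1 : MeasurePreserving E1
      (Measure.pi fun _ : Fin (j + 1) ⊕ Fin (M + 1) => μ) (pm μ N) :=
    measurePreserving_piCongrLeft (fun _ : Fin (N + 1) => μ) g
  have hmp2 : MeasurePreserving E2
      (Measure.pi fun _ : Fin (j + 1) ⊕ Fin (M + 1) => μ)
      ((pm μ j).prod (pm μ M)) :=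
    measurePreserving_sumPiEquivProdPi (fun _ => μ)
  have hmp : MeasurePreserving (E1.symm.trans E2) (pm μ N) ((pm μ j).prod (pm μ M)) :=
    hmp2.comp (hmp1.symm E1)
  have hE1symm : ∀ (x : Fin (N + 1) → ℝ) (i : Fin (j + 1) ⊕ Fin (M + 1)),
      E1.symm x i = x (g i) := by
    intro x i
    have h1 := MeasurableEquiv.piCongrLeft_apply_apply
      (β := fun _ : Fin (N + 1) => ℝ) g (E1.symm x) i
    have h2 : E1 (E1.symm x) = x := E1.apply_symm_apply x
    rw [h2] at h1
    exact h1.symm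
  have hset : Tset θ N s =
      (E1.symm.trans E2) ⁻¹' ((Tset θ j s) ×ˢ (Tset θ M fun i => s (j + 1 + i))) := by
    ext x
    simp only [Set.mem_preimage, MeasurableEquiv.trans_apply, Set.mem_prod, Tset,
      Set.mem_setOf_eq]
    have hfst : ∀ a : Fin (j + 1), (E2 (E1.symm x)).1 a = x (g (Sum.inl a)) :=
      fun a => hE1symm x (Sum.inl a)
    have hsnd : ∀ b : Fin (M + 1), (E2 (E1.symm x)).2 b = x (g (Sum.inr b)) :=
      fun b => hE1symm x (Sum.inr b)
    constructor
    · intro hx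
      constructor
      · intro i hi
        rw [hfst, hfst]
        have h1 : g (Sum.inl ⟨i, by omega⟩) = (⟨i, by omega⟩ : Fin (N + 1)) := by
          apply Fin.ext; rw [hgl]
        have h2 : g (Sum.inl ⟨i + 1, by omega⟩) = (⟨i + 1, by omega⟩ : Fin (N + 1)) := by
          apply Fin.ext; rw [hgl]
        rw [h1, h2]
        exact hx i (by omega)
      · intro i hi
        rw [hsnd, hsnd]
        have h1 : g (Sum.inr ⟨i, by omega⟩) = (⟨j + 1 + i, by omega⟩ : Fin (N + 1)) := by
          apply Fin.ext; rw [hgr]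
        have h2 : g (Sum.inr ⟨i + 1, by omega⟩) = (⟨j + 1 + i + 1, by omega⟩ : Fin (N + 1)) := by
          apply Fin.ext; rw [hgr]; show j + 1 + (i + 1) = j + 1 + i + 1; omega
        rw [h1, h2]
        have := hx (j + 1 + i) (by omega)
        have e2 : (⟨j + 1 + i + 1, by omega⟩ : Fin (N + 1)) = ⟨j + 1 + i + 1, by omega⟩ := rfl
        exact this
    · rintro ⟨hx1, hx2⟩ i hi
      rcases lt_trichotomy i j with hij | rfl | hij
      · have := hx1 i (by omega)
        rw [hfst, hfst] at this
        have h1 : g (Sum.inl ⟨i, by omega⟩) = (⟨i, by omega⟩ : Fin (N + 1)) := by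
          apply Fin.ext; rw [hgl]
        have h2 : g (Sum.inl ⟨i + 1, by omega⟩) = (⟨i + 1, by omega⟩ : Fin (N + 1)) := by
          apply Fin.ext; rw [hgl]
        rwa [h1, h2] at this
      · rw [hnone]; trivial
      · have := hx2 (i - (j + 1)) (by omega)
        rw [hsnd, hsnd] at this
        have h1 : g (Sum.inr ⟨i - (j + 1), by omega⟩) = (⟨i, by omega⟩ : Fin (N + 1)) := by
          apply Fin.ext; rw [hgr]; show j + 1 + (i - (j + 1)) = i; omega
        have h2 : g (Sum.inr ⟨i - (j + 1) + 1, by omega⟩) =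
            (⟨i + 1, by omega⟩ : Fin (N + 1)) := by
          apply Fin.ext; rw [hgr]; show j + 1 + (i - (j + 1) + 1) = i + 1; omega
        rw [h1, h2] at this
        rw [show j + 1 + (i - (j + 1)) = i from by omega] at this
        exact this
  rw [hset, hmp.measure_preimage_equiv, Measure.prod_prod]

/-- All-ascent pattern with the first `j` steps replaced by strict descents. -/
def Df (j : ℕ) : ℕ → Option Bool := fun i =>
  if j ≤ i then some true else some false

/-- Like `Df j` but with no condition at step `j`. -/
def Cf (j : ℕ) : ℕ → Option Bool := fun i =>
  if i = j then none else if j ≤ i then some true else some false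

/-- Telescoping alternating sum. -/
lemma alt_sum {f g : ℕ → ℝ} :
    ∀ N : ℕ, (∀ j, j < N → g j = f j + f (j + 1)) →
      f 0 = (∑ l ∈ Finset.range N, (-1 : ℝ) ^ l * g l) + (-1) ^ N * f N := by
  intro N
  induction N with
  | zero => intro _; simp
  | succ N ih =>
    intro h
    rw [Finset.sum_range_succ, ih (fun j hj => h j (by omega)), h N (by omega)]
    ring

/-- Value of the event with a free step: product of the two `genPers` factors. -/
lemma cval (μ : Measure ℝ) [IsProbabilityMeasure μ]
    (hatomless : ∀ x : ℝ, μ {x} = 0) {θ : ℝ} (hθ : 0 < θ) (j M : ℕ) :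
    (pm μ (j + (M + 1)) (Tset θ (j + (M + 1)) (Cf j))).toReal =
      genPers μ θ M * genPers μ (1 / θ) j := by
  rw [pm_Tset_prod μ θ (Cf j) j M (by simp [Cf])]
  have h1 : Tset θ j (Cf j) = Tset θ j (fun _ => some false) :=
    Tset_congr θ j fun i hi => by
      simp only [Cf]; rw [if_neg (by omega), if_neg (by omega)]
  have h2 : Tset θ M (fun i => Cf j (j + 1 + i)) = Tset θ M (fun _ => some true) :=
    Tset_congr θ M fun i hi => by
      simp only [Cf]; rw [if_neg (by omega), if_pos (by omega)]
  rw [h1, h2, pm_allFalse_eq μ hatomless hθ j, ENNReal.toReal_mul,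
    ← genPers_eq_pm, ← genPers_eq_pm]
  ring

end GenPersDual

open GenPersDual

theorem duality_general_positive (μ : Measure ℝ) [IsProbabilityMeasure μ]
    (hatomless : ∀ x : ℝ, μ {x} = 0) (θ : ℝ) (hθ : 0 < θ) :
    ∀ n : ℕ,
      genPers μ θ n =
        (∑ k ∈ Finset.Icc 1 n,
            (-1 : ℝ) ^ (k - 1) * genPers μ θ (n - k) * genPers μ (1 / θ) (k - 1)) +
          (-1) ^ n * genPers μ (1 / θ) n := by
  intro n
  -- step recursion
  have hsplit : ∀ j, j < n →
      (pm μ n (Tset θ n (Cf j))).toReal =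
        (pm μ n (Tset θ n (Df j))).toReal + (pm μ n (Tset θ n (Df (j + 1)))).toReal := by
    intro j hj
    have h1 : Function.update (Cf j) j (some true) = Df j := by
      funext i
      by_cases hij : i = j
      · subst hij; rw [Function.update_self]; simp [Df]
      · rw [Function.update_of_ne hij]; simp only [Cf, Df, if_neg hij]
    have h2 : Function.update (Cf j) j (some false) = Df (j + 1) := by
      funext i
      by_cases hij : i = j
      · subst hij; rw [Function.update_self]
        simp only [Df]; rw [if_neg (by omega)]
      · rw [Function.update_of_ne hij]
        simp only [Cf, Df, if_neg hij]
        by_cases h3 : j ≤ i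
        · rw [if_pos h3, if_pos (by omega)]
        · rw [if_neg h3, if_neg (by omega)]
    have hs := pm_Tset_split μ θ n (Cf j) j (by omega) (by simp [Cf])
    rw [h1, h2] at hs
    rw [hs, ENNReal.toReal_add (measure_ne_top _ _) (measure_ne_top _ _)]
  have halt := alt_sum (f := fun j => (pm μ n (Tset θ n (Df j))).toReal)
    (g := fun j => (pm μ n (Tset θ n (Cf j))).toReal) n hsplit
  have hf0 : (pm μ n (Tset θ n (Df 0))).toReal = genPers μ θ n := by
    have h1 : Tset θ n (Df 0) = Tset θ n (fun _ => some true) :=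
      Tset_congr θ n fun i _ => by simp [Df]
    rw [h1, ← genPers_eq_pm]
  have hfn : (pm μ n (Tset θ n (Df n))).toReal = genPers μ (1 / θ) n := by
    have h1 : Tset θ n (Df n) = Tset θ n (fun _ => some false) :=
      Tset_congr θ n fun i hi => by simp only [Df]; rw [if_neg (by omega)]
    rw [h1, pm_allFalse_eq μ hatomless hθ n, ← genPers_eq_pm]
  have hg : ∀ j, j < n → (pm μ n (Tset θ n (Cf j))).toReal =
      genPers μ θ (n - 1 - j) * genPers μ (1 / θ) j := by
    intro j hj
    have hM : n = j + ((n - 1 - j) + 1) := by omega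
    have step : (pm μ n (Tset θ n (Cf j))).toReal =
        (pm μ (j + ((n - 1 - j) + 1))
          (Tset θ (j + ((n - 1 - j) + 1)) (Cf j))).toReal := by rw [← hM]
    rw [step, cval μ hatomless hθ j (n - 1 - j)]
  simp only [hf0, hfn] at halt
  rw [halt]
  congr 1
  rw [← Finset.Ico_add_one_right_eq_Icc, Finset.sum_Ico_eq_sum_range, Nat.add_sub_cancel]
  refine Finset.sum_congr rfl fun l hl => ?_
  have hln : l < n := Finset.mem_range.mp hl
  rw [hg l hln]
  have e1 : 1 + l - 1 = l := by omega
  have e2 : n - (1 + l) = n - 1 - l := by omega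
  rw [e1, e2]
  ring
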